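/- arXiv:2303.16279 — 2 statements merged into one kernel-verified Lean document; each statement's English description precedes it below -/
import Mathlib

section
/- Consider the VR-A-CODER iterates. For all s ∈ {2,…,S} and k ∈ {1,…,K}: −Σ_{j=1}^m a_{s,k−1} E[⟨∇^(j) f_{t_{s,k,j}}(x_{s,k−1}) − ∇^(j) f_{t_{s,k,j}}(w_{s,k−1,j}), v_{s,k}^(j) − v_{s,k−1}^(j)⟩] ≤ E[(K(1 + A_{s−1}γ)/8)‖v_{s,k} − v_{s,k−1}‖² + (a_{s,k−1}^4 L²/(K A_{s,k−1}² (1 + A_{s−1}γ)))‖v_{s,k−1} − v_{s,k−2}‖²], where E denotes expectation over all the random indices. -/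
/-!
Pointwise, the inequality is Young's inequality applied block by block. By the block Lipschitz
condition, block `j` of the gradient difference is controlled by the `Q^j`-form of
`x_{s,k-1} - w_{s,k-1,j}`, which is `a_{s,k-1}/A_{s,k-1}` times the part of
`v_{s,k-2} - v_{s,k-1}` in the blocks after `j`; summed over `j` these forms are dominated by
the `Q̃`-form, hence by `(L²/2)‖v_{s,k-1} - v_{s,k-2}‖²`. To take expectations one needs
integrability: the prox steps have unique solutions, so every iterate is a function of the
finitely many sampled indices and every integrand takes only finitely many values.
-/

noncomputable section
open MeasureTheory Finset Set RealInnerProductSpace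

abbrev Euc (d : ℕ) := EuclideanSpace ℝ (Fin d)

def blockMask {d m : ℕ} (blk : Fin d → Fin m) (j : Fin m) (z : Euc d) : Euc d :=
  (EuclideanSpace.equiv (Fin d) ℝ).symm fun i => if blk i = j then z i else 0

def blockCombine {d m : ℕ} (blk : Fin d → Fin m) (j : ℕ) (x y : Euc d) : Euc d :=
  (EuclideanSpace.equiv (Fin d) ℝ).symm fun i => if (blk i : ℕ) + 1 ≤ j then x i else y i

def quadForm {d : ℕ} (Q : Matrix (Fin d) (Fin d) ℝ) (z : Euc d) : ℝ :=
  ∑ i, ∑ i', Q i i' * z i * z i'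

def keepGE {d m : ℕ} (blk : Fin d → Fin m) (j : ℕ) (Q : Matrix (Fin d) (Fin d) ℝ) :
    Matrix (Fin d) (Fin d) ℝ :=
  Matrix.of fun i i' => if j ≤ (blk i : ℕ) + 1 ∧ j ≤ (blk i' : ℕ) + 1 then Q i i' else 0

def Qtilde {d m : ℕ} (blk : Fin d → Fin m) (Q : Fin m → Matrix (Fin d) (Fin d) ℝ) :
    Matrix (Fin d) (Fin d) ℝ :=
  ∑ j : Fin m, (keepGE blk ((j : ℕ) + 1) (Q j) + keepGE blk ((j : ℕ) + 2) (Q j))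

def specNorm {d : ℕ} (Q : Matrix (Fin d) (Fin d) ℝ) : ℝ :=
  ‖Matrix.toEuclideanCLM (𝕜 := ℝ) Q‖

def bigL {d m : ℕ} (blk : Fin d → Fin m) (Q : Fin m → Matrix (Fin d) (Fin d) ℝ) : ℝ :=
  Real.sqrt (2 * specNorm (Qtilde blk Q))

def BlockLip {d m : ℕ} (blk : Fin d → Fin m) (f : Euc d → ℝ)
    (Q : Fin m → Matrix (Fin d) (Fin d) ℝ) : Prop :=
  ∀ (j : Fin m) (x y : Euc d),
    ‖blockMask blk j (gradient f x) - blockMask blk j (gradient f y)‖ ^ 2 ≤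
      quadForm (Q j) (x - y)

def SubgradStrongConvex {d : ℕ} (γ : ℝ) (g : Euc d → ℝ) : Prop :=
  ∀ x y s : Euc d, (∀ z, g x + ⟪s, z - x⟫ ≤ g z) →
    g x + ⟪s, y - x⟫ + γ / 2 * ‖y - x‖ ^ 2 ≤ g y

/-- The VR-A-CODER iterates (variance-reduced A-CODER), encoded pointwise on a
probability space `Ω` carrying the independent uniformly distributed sampling
indices `t s k j`.  Prox steps are encoded as minimization conditions. -/
structure VRACoder (d m n K S : ℕ) (blk : Fin d → Fin m)
    (f : Fin n → Euc d → ℝ) (g : Euc d → ℝ) (gj : Fin m → Euc d → ℝ)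
    (Q : Fin m → Matrix (Fin d) (Fin d) ℝ) (γ : ℝ)
    (Ω : Type) [MeasurableSpace Ω] (μ : MeasureTheory.Measure Ω) where
  x0 : Euc d
  t : ℕ → ℕ → Fin m → Ω → Fin n
  a : ℕ → ℝ
  A : ℕ → ℝ
  x : ℕ → ℕ → Ω → Euc d
  y : ℕ → ℕ → Ω → Euc d
  q : ℕ → ℕ → Ω → Euc d
  w : ℕ → ℕ → Fin m → Ω → Euc d
  v : ℕ → ℤ → Ω → Euc d
  ty : ℕ → Ω → Euc d
  hn : 0 < n
  hK : 1 ≤ K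
  hS : 2 ≤ S
  hmono : Monotone blk
  hsurj : Function.Surjective blk
  hpsd : ∀ j, (Q j).PosSemidef
  hLpos : 0 < bigL blk Q
  hfconv : ∀ i, ConvexOn ℝ Set.univ (f i)
  hfdiff : ∀ i, Differentiable ℝ (f i)
  hflip : ∀ i, BlockLip blk (f i) Q
  hγ : 0 ≤ γ
  hgconv : ConvexOn ℝ Set.univ g
  hgsc : SubgradStrongConvex γ g
  hgsep : ∀ z, g z = ∑ j, gj j z
  hgjblock : ∀ j u u', blockMask blk j u = blockMask blk j u' → gj j u = gj j u'
  hgjconv : ∀ j, ConvexOn ℝ Set.univ (gj j)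
  hprob : MeasureTheory.IsProbabilityMeasure μ
  htmeas : ∀ s k j, Measurable (t s k j)
  htunif : ∀ s k j c, μ (t s k j ⁻¹' {c}) = (n : ENNReal)⁻¹
  htindep : ProbabilityTheory.iIndepFun
      (fun p : ℕ × ℕ × Fin m => t p.1 p.2.1 p.2.2) μ
  ha0 : a 0 = 0
  hA0 : A 0 = 0
  ha1 : a 1 = 1 / (4 * bigL blk Q)
  hA1 : A 1 = a 1
  ha : ∀ s, 2 ≤ s → s ≤ S →
      a s = Real.sqrt ((K : ℝ) * A (s - 1) * (1 + A (s - 1) * γ) / (8 * bigL blk Q))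
  hA : ∀ s, 2 ≤ s → s ≤ S → A s = A (s - 1) + a s
  hty0 : ∀ ω, ty 0 ω = x0
  hv10 : ∀ ω, v 1 0 ω = x0
  hy10 : ∀ ω, y 1 0 ω = x0
  hx11 : ∀ ω, x 1 1 ω = x0
  hv11 : ∀ ω, IsMinOn (fun u => a 1 * g u +
      ‖u - (x0 - a 1 • gradient (fun z => (n : ℝ)⁻¹ * ∑ i, f i z) x0)‖ ^ 2 / 2)
      Set.univ (v 1 1 ω)
  hty1 : ∀ ω, ty 1 ω = v 1 1 ω
  hy11 : ∀ ω, y 1 1 ω = v 1 1 ω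
  hw11 : ∀ j ω, w 1 1 j ω = blockCombine blk ((j : ℕ) + 1) (x 1 1 ω) (y 1 1 ω)
  hv20 : ∀ ω, v 2 0 ω = v 1 1 ω
  hv2m1 : ∀ ω, v 2 (-1) ω = v 1 0 ω
  hw20 : ∀ j ω, w 2 0 j ω = w 1 1 j ω
  hx20 : ∀ ω, x 2 0 ω = x 1 1 ω
  hv0 : ∀ s, 3 ≤ s → s ≤ S → ∀ ω, v s 0 ω = v (s - 1) (K : ℤ) ω
  hvm1 : ∀ s, 3 ≤ s → s ≤ S → ∀ ω, v s (-1) ω = v (s - 1) ((K : ℤ) - 1) ω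
  hw0 : ∀ s, 3 ≤ s → s ≤ S → ∀ j ω, w s 0 j ω = w (s - 1) K j ω
  hx0 : ∀ s, 3 ≤ s → s ≤ S → ∀ ω, x s 0 ω = x (s - 1) K ω
  hxk : ∀ s, 2 ≤ s → s ≤ S → ∀ k, 1 ≤ k → k ≤ K → ∀ ω,
      x s k ω = (A (s - 1) / A s) • ty (s - 1) ω + (a s / A s) • v s ((k : ℤ) - 1) ω
  hw : ∀ s, 2 ≤ s → s ≤ S → ∀ k, 1 ≤ k → k ≤ K → ∀ j ω,
      w s k j ω = blockCombine blk ((j : ℕ) + 1) (x s k ω) (y s k ω)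
  hq : ∀ s, 2 ≤ s → s ≤ S → ∀ k, 1 ≤ k → k ≤ K → ∀ j ω,
      blockMask blk j (q s k ω) = blockMask blk j
        (gradient (f (t s k j ω)) (w s k j ω)
          - gradient (f (t s k j ω)) (ty (s - 1) ω)
          + gradient (fun z => (n : ℝ)⁻¹ * ∑ i, f i z) (ty (s - 1) ω)
          + ((if k = 1 then a (s - 1) else a s) / a s) •
              (gradient (f (t s k j ω)) (x s (k - 1) ω)
                - gradient (f (t s k j ω)) (w s (k - 1) j ω)))
  hv : ∀ s, 2 ≤ s → s ≤ S → ∀ k, 1 ≤ k → k ≤ K → ∀ ω,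
      IsMinOn (fun u => (A (s - 1) + a s * (k : ℝ) / (K : ℝ)) * g u +
        ‖u - (x0 - a 1 • gradient (fun z => (n : ℝ)⁻¹ * ∑ i, f i z) x0
          - (K : ℝ)⁻¹ • ((∑ s' ∈ Finset.Icc 2 (s - 1), ∑ k' ∈ Finset.Icc 1 K,
              a s' • q s' k' ω)
            + ∑ k' ∈ Finset.Icc 1 k, a s • q s k' ω))‖ ^ 2 / 2)
        Set.univ (v s (k : ℤ) ω)
  hy : ∀ s, 2 ≤ s → s ≤ S → ∀ k, 1 ≤ k → k ≤ K → ∀ ω,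
      y s k ω = (A (s - 1) / A s) • ty (s - 1) ω + (a s / A s) • v s (k : ℤ) ω
  hty : ∀ s, 2 ≤ s → s ≤ S → ∀ ω,
      ty s ω = (K : ℝ)⁻¹ • ∑ k ∈ Finset.Icc 1 K, y s k ω

section Blocks

variable {d m : ℕ} {blk : Fin d → Fin m}

lemma blockMask_apply (j : Fin m) (z : Euc d) (i : Fin d) :
    blockMask blk j z i = if blk i = j then z i else 0 := rfl

lemma blockCombine_apply (p : ℕ) (x y : Euc d) (i : Fin d) :
    blockCombine blk p x y i = if (blk i : ℕ) + 1 ≤ p then x i else y i := rfl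

variable (blk) in
def blockMaskLinearMap (j : Fin m) : Euc d →ₗ[ℝ] Euc d where
  toFun := blockMask blk j
  map_add' x y := by ext i; simp only [blockMask_apply, PiLp.add_apply]; split_ifs <;> simp
  map_smul' c x := by
    ext i; simp only [blockMask_apply, PiLp.smul_apply, smul_eq_mul]; split_ifs <;> simp

lemma blockMask_add (j : Fin m) (x y : Euc d) :
    blockMask blk j (x + y) = blockMask blk j x + blockMask blk j y :=
  map_add (blockMaskLinearMap blk j) x y

lemma blockMask_sub (j : Fin m) (x y : Euc d) :
    blockMask blk j (x - y) = blockMask blk j x - blockMask blk j y :=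
  map_sub (blockMaskLinearMap blk j) x y

lemma blockMask_smul (j : Fin m) (c : ℝ) (x : Euc d) :
    blockMask blk j (c • x) = c • blockMask blk j x :=
  map_smul (blockMaskLinearMap blk j) c x

lemma blockMask_blockMask (j j' : Fin m) (x : Euc d) :
    blockMask blk j' (blockMask blk j x) = if j' = j then blockMask blk j x else 0 := by
  split_ifs with h
  · subst h; ext i; simp only [blockMask_apply]; split_ifs <;> rfl
  · ext i; simp only [blockMask_apply, PiLp.zero_apply]; split_ifs <;> simp_all

lemma sum_blockMask (z : Euc d) : ∑ j : Fin m, blockMask blk j z = z := by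
  ext i
  simp [WithLp.ofLp_sum, Finset.sum_apply, blockMask_apply]

lemma norm_sq_eq_sum_norm_sq_blockMask (z : Euc d) :
    ‖z‖ ^ 2 = ∑ j : Fin m, ‖blockMask blk j z‖ ^ 2 := by
  simp only [EuclideanSpace.norm_sq_eq, blockMask_apply]
  rw [Finset.sum_comm]
  refine Finset.sum_congr rfl fun i _ => ?_
  simp

lemma eq_of_forall_blockMask_eq {z z' : Euc d}
    (h : ∀ j, blockMask blk j z = blockMask blk j z') : z = z' := by
  rw [← sum_blockMask (blk := blk) z, ← sum_blockMask (blk := blk) z']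
  exact Finset.sum_congr rfl fun j _ => h j

lemma apply_eq_of_blockMask_eq {j : Fin m} {z z' : Euc d}
    (h : blockMask blk j z = blockMask blk j z') {i : Fin d} (hi : blk i = j) : z i = z' i := by
  simpa [blockMask_apply, hi] using congrArg (· i) h

variable (blk) in
/-- Keeps the blocks `p, p + 1, …` (counted from `0`); `keepGE blk (p + 1)` is the matching
operation on matrices. -/
def tailMask (p : ℕ) (z : Euc d) : Euc d :=
  (EuclideanSpace.equiv (Fin d) ℝ).symm fun i => if (blk i : ℕ) + 1 ≤ p then 0 else z i

lemma tailMask_apply (p : ℕ) (z : Euc d) (i : Fin d) :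
    tailMask blk p z i = if (blk i : ℕ) + 1 ≤ p then 0 else z i := rfl

lemma tailMask_smul (p : ℕ) (c : ℝ) (z : Euc d) :
    tailMask blk p (c • z) = c • tailMask blk p z := by
  ext i; simp only [tailMask_apply, PiLp.smul_apply, smul_eq_mul]; split_ifs <;> simp

lemma sub_blockCombine (p : ℕ) (x y : Euc d) :
    x - blockCombine blk p x y = tailMask blk p (x - y) := by
  ext i; simp only [PiLp.sub_apply, blockCombine_apply, tailMask_apply]; split_ifs <;> simp

end Blocks

section QuadForm

variable {d m : ℕ}

lemma quadForm_eq_dotProduct (Q : Matrix (Fin d) (Fin d) ℝ) (z : Euc d) :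
    quadForm Q z = z ⬝ᵥ Q.mulVec z := by
  simp only [quadForm, dotProduct, Matrix.mulVec, Finset.mul_sum]
  exact Finset.sum_congr rfl fun i _ => Finset.sum_congr rfl fun i' _ => by ring

lemma quadForm_nonneg {Q : Matrix (Fin d) (Fin d) ℝ} (hQ : Q.PosSemidef) (z : Euc d) :
    0 ≤ quadForm Q z := by
  simpa [quadForm_eq_dotProduct] using hQ.dotProduct_mulVec_nonneg (⇑z)

lemma quadForm_add (Q R : Matrix (Fin d) (Fin d) ℝ) (z : Euc d) :
    quadForm (Q + R) z = quadForm Q z + quadForm R z := by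
  simp only [quadForm_eq_dotProduct, Matrix.add_mulVec, dotProduct_add]

lemma quadForm_sum {ι : Type*} (s : Finset ι) (Q : ι → Matrix (Fin d) (Fin d) ℝ) (z : Euc d) :
    quadForm (∑ j ∈ s, Q j) z = ∑ j ∈ s, quadForm (Q j) z := by
  simp only [quadForm_eq_dotProduct, Matrix.sum_mulVec, dotProduct_sum]

lemma quadForm_smul (Q : Matrix (Fin d) (Fin d) ℝ) (c : ℝ) (z : Euc d) :
    quadForm Q (c • z) = c ^ 2 * quadForm Q z := by
  simp only [quadForm, PiLp.smul_apply, smul_eq_mul, Finset.mul_sum]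
  exact Finset.sum_congr rfl fun i _ => Finset.sum_congr rfl fun i' _ => by ring

lemma quadForm_keepGE_succ {blk : Fin d → Fin m} (Q : Matrix (Fin d) (Fin d) ℝ) (p : ℕ)
    (z : Euc d) : quadForm (keepGE blk (p + 1) Q) z = quadForm Q (tailMask blk p z) := by
  refine Finset.sum_congr rfl fun i _ => Finset.sum_congr rfl fun i' _ => ?_
  simp only [keepGE, Matrix.of_apply, tailMask_apply]
  split_ifs <;> first | (exfalso; omega) | ring

lemma quadForm_le_specNorm_mul (Q : Matrix (Fin d) (Fin d) ℝ) (z : Euc d) :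
    quadForm Q z ≤ specNorm Q * ‖z‖ ^ 2 := by
  have hinner : quadForm Q z = ⟪Matrix.toEuclideanCLM (𝕜 := ℝ) Q z, z⟫ := by
    simp [quadForm_eq_dotProduct, EuclideanSpace.inner_eq_star_dotProduct]
  calc quadForm Q z ≤ ‖Matrix.toEuclideanCLM (𝕜 := ℝ) Q z‖ * ‖z‖ :=
        hinner ▸ real_inner_le_norm _ _
    _ ≤ specNorm Q * ‖z‖ * ‖z‖ := by
        gcongr; exact (Matrix.toEuclideanCLM (𝕜 := ℝ) Q).le_opNorm z
    _ = specNorm Q * ‖z‖ ^ 2 := by ring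

lemma sq_bigL {blk : Fin d → Fin m} (Q : Fin m → Matrix (Fin d) (Fin d) ℝ) :
    bigL blk Q ^ 2 = 2 * specNorm (Qtilde blk Q) :=
  Real.sq_sqrt (mul_nonneg zero_le_two (norm_nonneg _))

end QuadForm

section Estimates

lemma neg_mul_inner_le {F : Type*} [NormedAddCommGroup F] [InnerProductSpace ℝ F]
    (a : ℝ) {β : ℝ} (hβ : 0 < β) (D E : F) :
    -(a * ⟪D, E⟫) ≤ β / 2 * ‖E‖ ^ 2 + a ^ 2 / (2 * β) * ‖D‖ ^ 2 := by
  have h := norm_add_sq_real (β • E) (a • D)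
  rw [norm_smul, norm_smul, inner_smul_left, inner_smul_right, real_inner_comm] at h
  simp only [Real.norm_eq_abs, conj_trivial, mul_pow, sq_abs] at h
  have hsq : β / 2 * ‖E‖ ^ 2 + a ^ 2 / (2 * β) * ‖D‖ ^ 2 + a * ⟪D, E⟫ =
      ‖β • E + a • D‖ ^ 2 / (2 * β) := by
    rw [h]; field_simp; ring
  linarith [div_nonneg (sq_nonneg ‖β • E + a • D‖) (by positivity : (0 : ℝ) ≤ 2 * β)]

variable {d m n : ℕ} {blk : Fin d → Fin m} {f : Fin n → Euc d → ℝ}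
  {Q : Fin m → Matrix (Fin d) (Fin d) ℝ}

lemma sum_norm_sq_blockMask_gradient_sub_le (hpsd : ∀ j, (Q j).PosSemidef)
    (hflip : ∀ i, BlockLip blk (f i) Q) (t : Fin m → Fin n) (x : Euc d) (w : Fin m → Euc d)
    (c : ℝ) (z : Euc d) (hxw : ∀ j : Fin m, x - w j = c • tailMask blk ((j : ℕ) + 1) z) :
    ∑ j, ‖blockMask blk j (gradient (f (t j)) x - gradient (f (t j)) (w j))‖ ^ 2 ≤
      c ^ 2 * (bigL blk Q ^ 2 / 2) * ‖z‖ ^ 2 := by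
  have hQtilde : ∑ j : Fin m, quadForm (keepGE blk ((j : ℕ) + 2) (Q j)) z ≤
      quadForm (Qtilde blk Q) z := by
    rw [Qtilde, quadForm_sum]
    refine Finset.sum_le_sum fun j _ => ?_
    rw [quadForm_add, quadForm_keepGE_succ _ (j : ℕ)]
    linarith [quadForm_nonneg (hpsd j) (tailMask blk j z)]
  calc ∑ j, ‖blockMask blk j (gradient (f (t j)) x - gradient (f (t j)) (w j))‖ ^ 2
      ≤ ∑ j : Fin m, c ^ 2 * quadForm (keepGE blk ((j : ℕ) + 2) (Q j)) z := by
        refine Finset.sum_le_sum fun j _ => ?_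
        rw [blockMask_sub, quadForm_keepGE_succ, ← quadForm_smul, ← hxw j]
        exact hflip (t j) j x (w j)
    _ ≤ c ^ 2 * (specNorm (Qtilde blk Q) * ‖z‖ ^ 2) := by
        rw [← Finset.mul_sum]
        gcongr
        exact hQtilde.trans (quadForm_le_specNorm_mul _ z)
    _ = c ^ 2 * (bigL blk Q ^ 2 / 2) * ‖z‖ ^ 2 := by rw [sq_bigL]; ring

lemma neg_sum_inner_blockMask_le (hpsd : ∀ j, (Q j).PosSemidef)
    (hflip : ∀ i, BlockLip blk (f i) Q) (t : Fin m → Fin n) (x : Euc d) (w : Fin m → Euc d)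
    (c : ℝ) (z : Euc d) (hxw : ∀ j : Fin m, x - w j = c • tailMask blk ((j : ℕ) + 1) z)
    (v₁ v₀ : Euc d) (a : ℝ) {β : ℝ} (hβ : 0 < β) :
    -(∑ j, a * ⟪blockMask blk j (gradient (f (t j)) x - gradient (f (t j)) (w j)),
        blockMask blk j (v₁ - v₀)⟫) ≤
      β / 2 * ‖v₁ - v₀‖ ^ 2 + a ^ 2 * c ^ 2 * bigL blk Q ^ 2 / (4 * β) * ‖z‖ ^ 2 := by
  calc -(∑ j, a * ⟪blockMask blk j (gradient (f (t j)) x - gradient (f (t j)) (w j)),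
        blockMask blk j (v₁ - v₀)⟫)
      ≤ ∑ j, (β / 2 * ‖blockMask blk j (v₁ - v₀)‖ ^ 2 + a ^ 2 / (2 * β) *
          ‖blockMask blk j (gradient (f (t j)) x - gradient (f (t j)) (w j))‖ ^ 2) := by
        rw [← Finset.sum_neg_distrib]
        exact Finset.sum_le_sum fun j _ => neg_mul_inner_le a hβ _ _
    _ = β / 2 * ‖v₁ - v₀‖ ^ 2 + a ^ 2 / (2 * β) *
          ∑ j, ‖blockMask blk j (gradient (f (t j)) x - gradient (f (t j)) (w j))‖ ^ 2 := by
        rw [Finset.sum_add_distrib, ← Finset.mul_sum, ← Finset.mul_sum,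
          ← norm_sq_eq_sum_norm_sq_blockMask]
    _ ≤ β / 2 * ‖v₁ - v₀‖ ^ 2 + a ^ 2 / (2 * β) * (c ^ 2 * (bigL blk Q ^ 2 / 2) * ‖z‖ ^ 2) := by
        gcongr
        exact sum_norm_sq_blockMask_gradient_sub_le hpsd hflip t x w c z hxw
    _ = β / 2 * ‖v₁ - v₀‖ ^ 2 + a ^ 2 * c ^ 2 * bigL blk Q ^ 2 / (4 * β) * ‖z‖ ^ 2 := by ring

end Estimates

section Prox

lemma LinearMap.eq_of_isMinOn_add_norm_sq {E F : Type*} [AddCommGroup E] [Module ℝ E]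
    [NormedAddCommGroup F] [InnerProductSpace ℝ F] {φ : E → ℝ} (hφ : ConvexOn ℝ univ φ)
    (L : E →ₗ[ℝ] F) (b : F) {u u' : E}
    (hu : IsMinOn (fun u => φ u + ‖L u - b‖ ^ 2 / 2) univ u)
    (hu' : IsMinOn (fun u => φ u + ‖L u - b‖ ^ 2 / 2) univ u') : L u = L u' := by
  set p : E := (1 / 2 : ℝ) • u + (1 / 2 : ℝ) • u'
  rw [isMinOn_univ_iff] at hu hu'
  have hp := hu p
  have hu'u := hu' u
  have hφp : φ p ≤ (1 / 2 : ℝ) * φ u + (1 / 2 : ℝ) * φ u' :=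
    hφ.2 (mem_univ u) (mem_univ u') (by norm_num) (by norm_num) (by norm_num)
  have hsum : (L u - b) + (L u' - b) = (2 : ℝ) • (L p - b) := by
    simp only [p, map_add, map_smul]; module
  have hpar := parallelogram_law_with_norm ℝ (L u - b) (L u' - b)
  rw [hsum, norm_smul, sub_sub_sub_cancel_right] at hpar
  simp only [Real.norm_two] at hpar
  -- at the midpoint `p` the objective is at most its minimum minus `‖L u - L u'‖ ^ 2 / 8`
  have hdist : ‖L u - L u'‖ ^ 2 ≤ 0 := by nlinarith
  rw [← sub_eq_zero, ← norm_eq_zero]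
  exact pow_eq_zero_iff two_ne_zero |>.mp (le_antisymm hdist (sq_nonneg _))

variable {d m : ℕ} {blk : Fin d → Fin m} {g : Euc d → ℝ} {gj : Fin m → Euc d → ℝ}

lemma blockMask_replaceBlock (j j' : Fin m) (u w : Euc d) :
    blockMask blk j' (u - blockMask blk j u + blockMask blk j w) =
      if j' = j then blockMask blk j w else blockMask blk j' u := by
  simp only [blockMask_add, blockMask_sub, blockMask_blockMask]
  split_ifs with h
  · subst h; abel
  · abel

lemma mul_add_norm_sq_eq_sum_blocks (hgsep : ∀ z, g z = ∑ j, gj j z) (c : ℝ) (b u : Euc d) :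
    c * g u + ‖u - b‖ ^ 2 / 2 =
      ∑ j, (c * gj j u + ‖blockMask blk j u - blockMask blk j b‖ ^ 2 / 2) := by
  simp only [hgsep u, Finset.mul_sum, norm_sq_eq_sum_norm_sq_blockMask (blk := blk) (u - b),
    Finset.sum_div, ← Finset.sum_add_distrib, blockMask_sub]

/-- Replacing block `j` of `u` by that of `w` changes only the `j`-th summand of the
objective. -/
lemma isMinOn_blockMask (hgsep : ∀ z, g z = ∑ j, gj j z)
    (hgjblock : ∀ j u u', blockMask blk j u = blockMask blk j u' → gj j u = gj j u')
    {c : ℝ} {b u : Euc d} (hu : IsMinOn (fun u => c * g u + ‖u - b‖ ^ 2 / 2) univ u)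
    (j : Fin m) :
    IsMinOn (fun w => c * gj j w + ‖blockMask blk j w - blockMask blk j b‖ ^ 2 / 2) univ u := by
  set T : Fin m → Euc d → ℝ := fun j w =>
    c * gj j w + ‖blockMask blk j w - blockMask blk j b‖ ^ 2 / 2
  rw [isMinOn_univ_iff] at hu ⊢
  intro w
  set R : Euc d := u - blockMask blk j u + blockMask blk j w
  have hTR : ∀ j', T j' R - T j' u = if j' = j then T j w - T j u else 0 := by
    intro j'
    have hm : blockMask blk j' R = if j' = j then blockMask blk j w else blockMask blk j' u :=
      blockMask_replaceBlock j j' u w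
    split_ifs at hm ⊢ with h
    · subst h; simp only [T, hm, hgjblock _ R w hm]
    · simp only [T, hm, hgjblock _ R u hm, sub_self]
  have hR := hu R
  rw [mul_add_norm_sq_eq_sum_blocks hgsep, mul_add_norm_sq_eq_sum_blocks hgsep,
    ← sub_nonneg, ← Finset.sum_sub_distrib, Finset.sum_congr rfl fun j' _ => hTR j',
    Finset.sum_ite_eq' Finset.univ j, if_pos (Finset.mem_univ j)] at hR
  exact sub_nonneg.mp hR

lemma blockMask_eq_of_isMinOn (hgsep : ∀ z, g z = ∑ j, gj j z)
    (hgjblock : ∀ j u u', blockMask blk j u = blockMask blk j u' → gj j u = gj j u')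
    (hgjconv : ∀ j, ConvexOn ℝ univ (gj j)) {c : ℝ} (hc : 0 ≤ c) {b b' u u' : Euc d}
    (hu : IsMinOn (fun u => c * g u + ‖u - b‖ ^ 2 / 2) univ u)
    (hu' : IsMinOn (fun u => c * g u + ‖u - b'‖ ^ 2 / 2) univ u') (j : Fin m)
    (hb : blockMask blk j b = blockMask blk j b') : blockMask blk j u = blockMask blk j u' :=
  (blockMaskLinearMap blk j).eq_of_isMinOn_add_norm_sq ((hgjconv j).smul hc) _
    (isMinOn_blockMask hgsep hgjblock hu j) (hb ▸ isMinOn_blockMask hgsep hgjblock hu' j)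

end Prox

section Integrability

variable {Ω : Type*} [MeasurableSpace Ω] {μ : Measure Ω}

lemma integrable_of_factorsThrough {α E : Type*} [MeasurableSpace α] [Finite α]
    [MeasurableSingletonClass α] [NormedAddCommGroup E] [IsFiniteMeasure μ] {τ : Ω → α}
    (hτ : Measurable τ) {u : Ω → E} (hu : u.FactorsThrough τ) : Integrable u μ := by
  have hext : u = Function.extend τ u 0 ∘ τ := funext fun ω => (hu.extend_apply 0 ω).symm
  rw [hext]
  exact Integrable.of_finite.comp_measurable hτ

lemma neg_sum_mul_integral_le_integral {ι : Type*} (s : Finset ι) (c : ι → ℝ)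
    {F : ι → Ω → ℝ} {G : Ω → ℝ} (hF : ∀ i, Integrable (F i) μ) (hG : Integrable G μ)
    (h : ∀ ω, -(∑ i ∈ s, c i * F i ω) ≤ G ω) :
    -(∑ i ∈ s, c i * ∫ ω, F i ω ∂μ) ≤ ∫ ω, G ω ∂μ := by
  have hcF : ∀ i ∈ s, Integrable (fun ω => c i * F i ω) μ := fun i _ => (hF i).const_mul (c i)
  calc -(∑ i ∈ s, c i * ∫ ω, F i ω ∂μ) = ∫ ω, -(∑ i ∈ s, c i * F i ω) ∂μ := by
        simp only [integral_neg, integral_finsetSum s hcF, integral_const_mul]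
    _ ≤ ∫ ω, G ω ∂μ := integral_mono (integrable_finsetSum s hcF).neg hG h

end Integrability

namespace VRACoder

variable {d m n K S : ℕ} {blk : Fin d → Fin m} {f : Fin n → Euc d → ℝ}
  {g : Euc d → ℝ} {gj : Fin m → Euc d → ℝ} {Q : Fin m → Matrix (Fin d) (Fin d) ℝ}
  {γ : ℝ} {Ω : Type} [MeasurableSpace Ω] {μ : Measure Ω}
  (P : VRACoder d m n K S blk f g gj Q γ Ω μ)

/-- `a_{s,k-1}` -/
def aPrev (s k : ℕ) : ℝ := if k = 1 then P.a (s - 1) else P.a s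

/-- `A_{s,k-1}` -/
def APrev (s k : ℕ) : ℝ := if k = 1 then P.A (s - 1) else P.A s

lemma a_one_pos : 0 < P.a 1 := by
  rw [P.ha1]; exact one_div_pos.mpr (mul_pos four_pos P.hLpos)

lemma a_nonneg {s : ℕ} (hs : 1 ≤ s) (hsS : s ≤ S) : 0 ≤ P.a s := by
  rcases hs.eq_or_lt with rfl | hs
  · exact P.a_one_pos.le
  · rw [P.ha s hs hsS]; exact Real.sqrt_nonneg _

lemma A_nonneg : ∀ {s : ℕ}, s ≤ S → 0 ≤ P.A s
  | 0, _ => P.hA0.ge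
  | 1, _ => P.hA1 ▸ P.a_nonneg le_rfl (by omega)
  | s + 2, hsS => by
    rw [P.hA (s + 2) (by omega) hsS]
    exact add_nonneg (A_nonneg (by omega)) (P.a_nonneg (by omega) hsS)

lemma one_add_A_mul_pos (s : ℕ) (hsS : s ≤ S) : 0 < 1 + P.A s * γ := by
  nlinarith [P.A_nonneg hsS, P.hγ]

lemma x_sub_w {s k : ℕ} (hs : 2 ≤ s) (hsS : s ≤ S) (hk1 : 1 ≤ k) (hkK : k ≤ K) (j : Fin m)
    (ω : Ω) : P.x s k ω - P.w s k j ω =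
      (P.a s / P.A s) • tailMask blk ((j : ℕ) + 1) (P.v s ((k : ℤ) - 1) ω - P.v s k ω) := by
  rw [P.hw s hs hsS k hk1 hkK j ω, sub_blockCombine, P.hxk s hs hsS k hk1 hkK ω,
    P.hy s hs hsS k hk1 hkK ω, add_sub_add_left_eq_sub, ← smul_sub, tailMask_smul]

lemma x_sub_w_prev {s k : ℕ} (hs : 2 ≤ s) (hsS : s ≤ S) (hk1 : 1 ≤ k) (hkK : k ≤ K)
    (j : Fin m) (ω : Ω) : P.x s (k - 1) ω - P.w s (k - 1) j ω =
      (P.aPrev s k / P.APrev s k) •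
        tailMask blk ((j : ℕ) + 1) (P.v s ((k : ℤ) - 2) ω - P.v s ((k : ℤ) - 1) ω) := by
  obtain rfl | hk := hk1.eq_or_lt
  · rw [aPrev, APrev, if_pos rfl, if_pos rfl, Nat.sub_self, Nat.cast_one, sub_self,
      show (1 : ℤ) - 2 = -1 by norm_num]
    obtain rfl | hs := hs.eq_or_lt
    · rw [P.hx20, P.hw20, P.hw11, sub_blockCombine, P.hv2m1, P.hv20, P.hv10, P.hy11, P.hx11,
        Nat.add_one_sub_one, P.hA1, div_self P.a_one_pos.ne', one_smul]
    · rw [P.hx0 s hs hsS, P.hw0 s hs hsS, P.x_sub_w (by omega) (by omega) P.hK le_rfl,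
        P.hvm1 s hs hsS, P.hv0 s hs hsS]
  · rw [aPrev, APrev, if_neg hk.ne', if_neg hk.ne', P.x_sub_w hs hsS (by omega) (by omega)]
    congr 4 <;> push_cast [hk.le] <;> ring

def qSum (s k : ℕ) (ω : Ω) : Euc d :=
  (∑ s' ∈ Finset.Icc 2 (s - 1), ∑ k' ∈ Finset.Icc 1 K, P.a s' • P.q s' k' ω)
    + ∑ k' ∈ Finset.Icc 1 k, P.a s • P.q s k' ω

lemma qSum_succ (s k : ℕ) (ω : Ω) :
    P.qSum s (k + 1) ω = P.qSum s k ω + P.a s • P.q s (k + 1) ω := by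
  rw [qSum, qSum, Finset.sum_Icc_succ_top (by omega), add_assoc]

lemma qSum_succ_zero {s : ℕ} (hs : 2 ≤ s) (ω : Ω) : P.qSum (s + 1) 0 ω = P.qSum s K ω := by
  obtain ⟨r, rfl⟩ : ∃ r, s = r + 1 := ⟨s - 1, by omega⟩
  simp only [qSum, Nat.add_sub_cancel, Finset.Icc_eq_empty_of_lt zero_lt_one, Finset.sum_empty,
    add_zero, Finset.sum_Icc_succ_top hs]

lemma isMinOn_v {s k : ℕ} (hs : 2 ≤ s) (hsS : s ≤ S) (hk1 : 1 ≤ k) (hkK : k ≤ K) (ω : Ω) :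
    IsMinOn (fun u => (P.A (s - 1) + P.a s * (k : ℝ) / (K : ℝ)) * g u +
      ‖u - (P.x0 - P.a 1 • gradient (fun z => (n : ℝ)⁻¹ * ∑ i, f i z) P.x0
        - (K : ℝ)⁻¹ • P.qSum s k ω)‖ ^ 2 / 2) univ (P.v s (k : ℤ) ω) :=
  P.hv s hs hsS k hk1 hkK ω

def indexTuple (ω : Ω) : Fin (S + 1) → Fin (K + 1) → Fin m → Fin n :=
  fun s k j => P.t s k j ω

lemma measurable_indexTuple : Measurable P.indexTuple :=
  measurable_pi_lambda _ fun s => measurable_pi_lambda _ fun k =>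
    measurable_pi_lambda _ fun j => P.htmeas s k j

section Agreement

variable {P} {ω ω' : Ω}

lemma t_eq_of_indexTuple_eq (hτ : P.indexTuple ω = P.indexTuple ω') {s k : ℕ} (hsS : s ≤ S)
    (hkK : k ≤ K) (j : Fin m) : P.t s k j ω = P.t s k j ω' :=
  congrFun (congrFun (congrFun hτ ⟨s, by omega⟩) ⟨k, by omega⟩) j

variable (P) in
structure StepAgree (s k : ℕ) (ω ω' : Ω) : Prop where
  x : P.x s k ω = P.x s k ω'
  w : ∀ j, P.w s k j ω = P.w s k j ω'
  v : P.v s k ω = P.v s k ω'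
  qSum : P.qSum s k ω = P.qSum s k ω'

variable (P) in
structure EpochStartAgree (s : ℕ) (ω ω' : Ω) : Prop where
  ty : P.ty (s - 1) ω = P.ty (s - 1) ω'
  v_neg_one : P.v s (-1) ω = P.v s (-1) ω'
  stepAgree_zero : P.StepAgree s 0 ω ω'

/-- Descending induction over the blocks: block `j` of `q_{s,k}`, and hence of `v_{s,k}`, only
involves the blocks `> j` of `v_{s,k}`. -/
lemma blockMask_v_q_agree {s k : ℕ} (hs : 2 ≤ s) (hsS : s ≤ S) (hkK : k + 1 ≤ K)
    (hE : P.EpochStartAgree s ω ω') (hk : P.StepAgree s k ω ω')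
    (hx : P.x s (k + 1) ω = P.x s (k + 1) ω') (ht : ∀ j, P.t s (k + 1) j ω = P.t s (k + 1) j ω')
    (j : Fin m) :
    blockMask blk j (P.v s (k + 1 : ℕ) ω) = blockMask blk j (P.v s (k + 1 : ℕ) ω') ∧
      blockMask blk j (P.q s (k + 1) ω) = blockMask blk j (P.q s (k + 1) ω') := by
  induction j using WellFoundedGT.induction with
  | ind j ih =>
  have hy : ∀ i, j < blk i → P.y s (k + 1) ω i = P.y s (k + 1) ω' i := fun i hi => by
    simp only [P.hy s hs hsS (k + 1) (by omega) hkK, PiLp.add_apply, PiLp.smul_apply, hE.ty,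
      apply_eq_of_blockMask_eq (ih _ hi).1 rfl]
  have hw : P.w s (k + 1) j ω = P.w s (k + 1) j ω' := by
    rw [P.hw s hs hsS (k + 1) (by omega) hkK j, P.hw s hs hsS (k + 1) (by omega) hkK j]
    ext i
    simp only [blockCombine_apply]
    split_ifs with h
    · rw [hx]
    · exact hy i (Fin.lt_def.mpr (by omega))
  have hq : blockMask blk j (P.q s (k + 1) ω) = blockMask blk j (P.q s (k + 1) ω') := by
    have hq := P.hq s hs hsS (k + 1) (by omega) hkK j
    simp only [Nat.add_sub_cancel] at hq
    rw [hq ω, hq ω', ht j, hw, hE.ty, hk.x, hk.w j]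
  refine ⟨blockMask_eq_of_isMinOn P.hgsep P.hgjblock P.hgjconv ?_
    (P.isMinOn_v hs hsS (by omega) hkK ω) (P.isMinOn_v hs hsS (by omega) hkK ω') j ?_, hq⟩
  · have := P.a_nonneg (by omega) hsS
    have := P.A_nonneg (s := s - 1) (by omega)
    positivity
  · simp only [blockMask_sub, blockMask_smul, qSum_succ, blockMask_add, hk.qSum, hq]

lemma StepAgree.succ {s k : ℕ} (hs : 2 ≤ s) (hsS : s ≤ S) (hkK : k + 1 ≤ K)
    (hE : P.EpochStartAgree s ω ω') (hk : P.StepAgree s k ω ω')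
    (ht : ∀ j, P.t s (k + 1) j ω = P.t s (k + 1) j ω') : P.StepAgree s (k + 1) ω ω' := by
  have hx : P.x s (k + 1) ω = P.x s (k + 1) ω' := by
    simp only [P.hxk s hs hsS (k + 1) (by omega) hkK, Nat.cast_add, Nat.cast_one,
      add_sub_cancel_right, hE.ty, hk.v]
  have hvq := P.blockMask_v_q_agree hs hsS hkK hE hk hx ht
  have hv := eq_of_forall_blockMask_eq fun j => (hvq j).1
  have hq := eq_of_forall_blockMask_eq fun j => (hvq j).2
  refine ⟨hx, fun j => ?_, hv, ?_⟩
  · rw [P.hw s hs hsS (k + 1) (by omega) hkK j, P.hw s hs hsS (k + 1) (by omega) hkK j, hx,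
      P.hy s hs hsS (k + 1) (by omega) hkK, P.hy s hs hsS (k + 1) (by omega) hkK, hE.ty, hv]
  · rw [qSum_succ, qSum_succ, hk.qSum, hq]

lemma EpochStartAgree.stepAgree {s : ℕ} (hs : 2 ≤ s) (hsS : s ≤ S)
    (hτ : P.indexTuple ω = P.indexTuple ω') (hE : P.EpochStartAgree s ω ω') :
    ∀ k ≤ K, P.StepAgree s k ω ω'
  | 0, _ => hE.stepAgree_zero
  | k + 1, hkK => (hE.stepAgree hs hsS hτ k (by omega)).succ hs hsS hkK hE
      (t_eq_of_indexTuple_eq hτ hsS hkK)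

lemma EpochStartAgree.succ {s : ℕ} (hs : 2 ≤ s) (hsS : s + 1 ≤ S)
    (hτ : P.indexTuple ω = P.indexTuple ω') (hE : P.EpochStartAgree s ω ω') :
    P.EpochStartAgree (s + 1) ω ω' := by
  have hstep := hE.stepAgree hs (by omega) hτ
  have hK := hstep K le_rfl
  refine ⟨?_, ?_, ⟨?_, fun j => ?_, ?_, ?_⟩⟩
  · simp only [Nat.add_sub_cancel, P.hty s hs (by omega)]
    congr 1
    refine Finset.sum_congr rfl fun k hk => ?_
    obtain ⟨hk1, hkK⟩ := Finset.mem_Icc.mp hk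
    rw [P.hy s hs (by omega) k hk1 hkK, P.hy s hs (by omega) k hk1 hkK, hE.ty, (hstep k hkK).v]
  · have hv := (hstep (K - 1) (by omega)).v
    rw [Nat.cast_sub P.hK, Nat.cast_one] at hv
    simpa only [P.hvm1 (s + 1) (by omega) hsS, Nat.add_sub_cancel] using hv
  · simpa only [P.hx0 (s + 1) (by omega) hsS, Nat.add_sub_cancel] using hK.x
  · simpa only [P.hw0 (s + 1) (by omega) hsS, Nat.add_sub_cancel] using hK.w j
  · simpa only [Nat.cast_zero, P.hv0 (s + 1) (by omega) hsS, Nat.add_sub_cancel] using hK.v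
  · rw [P.qSum_succ_zero hs, P.qSum_succ_zero hs, hK.qSum]

lemma epochStartAgree_two : P.EpochStartAgree 2 ω ω' := by
  have hv11 : P.v 1 1 ω = P.v 1 1 ω' :=
    (LinearMap.id).eq_of_isMinOn_add_norm_sq (P.hgconv.smul P.a_one_pos.le) _
      (P.hv11 ω) (P.hv11 ω')
  refine ⟨?_, ?_, ⟨?_, fun j => ?_, ?_, ?_⟩⟩
  · simp only [Nat.add_one_sub_one, P.hty1, hv11]
  · rw [P.hv2m1, P.hv2m1, P.hv10, P.hv10]
  · rw [P.hx20, P.hx20, P.hx11, P.hx11]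
  · rw [P.hw20, P.hw20, P.hw11, P.hw11, P.hx11, P.hx11, P.hy11, P.hy11, hv11]
  · simp only [Nat.cast_zero, P.hv20, hv11]
  · simp [qSum]

lemma epochStartAgree (hτ : P.indexTuple ω = P.indexTuple ω') {s : ℕ} (hs : 2 ≤ s) (hsS : s ≤ S) :
    P.EpochStartAgree s ω ω' := by
  induction s, hs using Nat.le_induction with
  | base => exact epochStartAgree_two
  | succ s hs ih => exact (ih (by omega)).succ hs hsS hτ

end Agreement

lemma v_eq_of_indexTuple_eq {ω ω' : Ω} (hτ : P.indexTuple ω = P.indexTuple ω') {s : ℕ}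
    (hs : 2 ≤ s) (hsS : s ≤ S) {k : ℤ} (hk : -1 ≤ k) (hkK : k ≤ K) :
    P.v s k ω = P.v s k ω' := by
  obtain rfl | hk := hk.eq_or_lt
  · exact (P.epochStartAgree hτ hs hsS).v_neg_one
  · lift k to ℕ using (by omega)
    exact ((P.epochStartAgree hτ hs hsS).stepAgree hs hsS hτ k (by exact_mod_cast hkK)).v

lemma integrable_comp_iterates [IsFiniteMeasure μ] {s k : ℕ} (hs : 2 ≤ s) (hsS : s ≤ S)
    (hk1 : 1 ≤ k) (hkK : k ≤ K)
    (Φ : (Fin m → Fin n) → Euc d → (Fin m → Euc d) → Euc d → Euc d → Euc d → ℝ) :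
    Integrable (fun ω => Φ (fun j => P.t s k j ω) (P.x s (k - 1) ω) (fun j => P.w s (k - 1) j ω)
      (P.v s k ω) (P.v s ((k : ℤ) - 1) ω) (P.v s ((k : ℤ) - 2) ω)) μ := by
  refine integrable_of_factorsThrough P.measurable_indexTuple fun ω ω' hτ => ?_
  have hprev := (P.epochStartAgree hτ hs hsS).stepAgree hs hsS hτ (k - 1) (by omega)
  simp only [t_eq_of_indexTuple_eq hτ hsS hkK, hprev.x, hprev.w,
    P.v_eq_of_indexTuple_eq hτ hs hsS (k := k) (by omega) (by exact_mod_cast hkK),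
    P.v_eq_of_indexTuple_eq hτ hs hsS (k := k - 1) (by omega) (by omega),
    P.v_eq_of_indexTuple_eq hτ hs hsS (k := k - 2) (by omega) (by omega)]

lemma neg_sum_inner_le {s k : ℕ} (hs : 2 ≤ s) (hsS : s ≤ S) (hk1 : 1 ≤ k) (hkK : k ≤ K)
    (ω : Ω) :
    -(∑ j : Fin m, P.aPrev s k *
        ⟪blockMask blk j (gradient (f (P.t s k j ω)) (P.x s (k - 1) ω)
            - gradient (f (P.t s k j ω)) (P.w s (k - 1) j ω)),
          blockMask blk j (P.v s (k : ℤ) ω - P.v s ((k : ℤ) - 1) ω)⟫) ≤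
      (K : ℝ) * (1 + P.A (s - 1) * γ) / 8 * ‖P.v s (k : ℤ) ω - P.v s ((k : ℤ) - 1) ω‖ ^ 2
        + P.aPrev s k ^ 4 * bigL blk Q ^ 2 / ((K : ℝ) * P.APrev s k ^ 2 * (1 + P.A (s - 1) * γ))
          * ‖P.v s ((k : ℤ) - 1) ω - P.v s ((k : ℤ) - 2) ω‖ ^ 2 := by
  have hβ : 0 < (K : ℝ) * (1 + P.A (s - 1) * γ) / 4 := by
    have := P.one_add_A_mul_pos (s - 1) (by omega)
    have : (0 : ℝ) < K := by exact_mod_cast P.hK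
    positivity
  have h := neg_sum_inner_blockMask_le P.hpsd P.hflip (fun j => P.t s k j ω) _ _ _ _
    (P.x_sub_w_prev hs hsS hk1 hkK · ω) (P.v s k ω) (P.v s ((k : ℤ) - 1) ω) (P.aPrev s k) hβ
  rw [norm_sub_rev (P.v s ((k : ℤ) - 2) ω)] at h
  generalize 1 + P.A (s - 1) * γ = X at h ⊢
  convert h using 2 <;> ring

end VRACoder

theorem stmt14 {d m n K S : ℕ} {blk : Fin d → Fin m} {f : Fin n → Euc d → ℝ}
    {g : Euc d → ℝ} {gj : Fin m → Euc d → ℝ} {Q : Fin m → Matrix (Fin d) (Fin d) ℝ}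
    {γ : ℝ} {Ω : Type} [MeasurableSpace Ω] {μ : MeasureTheory.Measure Ω}
    (P : VRACoder d m n K S blk f g gj Q γ Ω μ) :
    ∀ s, 2 ≤ s → s ≤ S → ∀ k, 1 ≤ k → k ≤ K →
      -(∑ j : Fin m, (if k = 1 then P.a (s - 1) else P.a s) * ∫ ω,
          ⟪blockMask blk j (gradient (f (P.t s k j ω)) (P.x s (k - 1) ω)
              - gradient (f (P.t s k j ω)) (P.w s (k - 1) j ω)),
            blockMask blk j (P.v s (k : ℤ) ω - P.v s ((k : ℤ) - 1) ω)⟫ ∂μ) ≤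
        ∫ ω,
          ((K : ℝ) * (1 + P.A (s - 1) * γ) / 8 *
              ‖P.v s (k : ℤ) ω - P.v s ((k : ℤ) - 1) ω‖ ^ 2
            + (if k = 1 then P.a (s - 1) else P.a s) ^ 4 * bigL blk Q ^ 2 /
                ((K : ℝ) * (if k = 1 then P.A (s - 1) else P.A s) ^ 2 *
                  (1 + P.A (s - 1) * γ)) *
                ‖P.v s ((k : ℤ) - 1) ω - P.v s ((k : ℤ) - 2) ω‖ ^ 2) ∂μ := by
  intro s hs hsS k hk1 hkK
  have := P.hprob
  exact neg_sum_mul_integral_le_integral _ _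
    (fun j => P.integrable_comp_iterates hs hsS hk1 hkK fun t x w v₂ v₁ _ =>
      ⟪blockMask blk j (gradient (f (t j)) x - gradient (f (t j)) (w j)),
        blockMask blk j (v₂ - v₁)⟫)
    (P.integrable_comp_iterates hs hsS hk1 hkK fun _ _ _ v₂ v₁ v₀ =>
      (K : ℝ) * (1 + P.A (s - 1) * γ) / 8 * ‖v₂ - v₁‖ ^ 2 + P.aPrev s k ^ 4 * bigL blk Q ^ 2 /
        ((K : ℝ) * P.APrev s k ^ 2 * (1 + P.A (s - 1) * γ)) * ‖v₁ - v₀‖ ^ 2)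
    (P.neg_sum_inner_le hs hsS hk1 hkK)
end
end

section
/- Let L > 0, γ ≥ 0, and K ≥ 1. Define A_1 = 1/(4L) and, for s ≥ 2, A_s = A_{s−1} + a_s with a_s = √(K A_{s−1}(1 + A_{s−1}γ)/(8L)). Then for every S ≥ 1: A_S ≥ (1/(4L)) (1 + √(Kγ/(8L)))^{S−1}. -/
/-! Dropping the `1` under the square root gives `a_s ≥ A_{s-1} √(Kγ/(8L))` as long as
`A_{s-1} ≥ 0`, so `A_s ≥ (1 + √(Kγ/(8L))) A_{s-1}` and the bound follows by induction. -/

theorem mul_pow_pred_le_of_mul_le_succ {A : ℕ → ℝ} {c r : ℝ} (hc : 0 ≤ c) (hr : 0 ≤ r)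
    (h1 : c ≤ A 1) (hstep : ∀ n, 1 ≤ n → 0 ≤ A n → A n * r ≤ A (n + 1)) :
    ∀ S, 1 ≤ S → c * r ^ (S - 1) ≤ A S := by
  intro S hS
  induction S, hS using Nat.le_induction with
  | base => simpa using h1
  | succ n hn ih =>
    have hAn : 0 ≤ A n := (by positivity : 0 ≤ c * r ^ (n - 1)).trans ih
    calc c * r ^ (n + 1 - 1)
        = c * r ^ (n - 1) * r := by rw [mul_assoc, ← pow_succ, Nat.sub_add_cancel hn, Nat.add_sub_cancel]
      _ ≤ A n * r := mul_le_mul_of_nonneg_right ih hr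
      _ ≤ A (n + 1) := hstep n hn hAn

theorem mul_sqrt_le_sqrt_mul_one_add {k m x γ : ℝ} (hk : 0 ≤ k) (hm : 0 ≤ m) (hx : 0 ≤ x) :
    x * √(k * γ / m) ≤ √(k * x * (1 + x * γ) / m) := by
  have hsplit : k * x * (1 + x * γ) / m = k * x / m + x ^ 2 * (k * γ / m) := by ring
  have hlin : 0 ≤ k * x / m := by positivity
  calc x * √(k * γ / m)
      = √(x ^ 2 * (k * γ / m)) := by rw [Real.sqrt_mul (sq_nonneg x), Real.sqrt_sq hx]
    _ ≤ √(k * x * (1 + x * γ) / m) := Real.sqrt_le_sqrt (by linarith)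

theorem stmt19_general (L γ : ℝ) (hL : 0 < L) (K : ℕ)
    (a A : ℕ → ℝ) (hA1 : A 1 = 1 / (4 * L))
    (ha : ∀ s, 2 ≤ s → a s =
      Real.sqrt ((K : ℝ) * A (s - 1) * (1 + A (s - 1) * γ) / (8 * L)))
    (hA : ∀ s, 2 ≤ s → A s = A (s - 1) + a s) :
    ∀ S : ℕ, 1 ≤ S →
      1 / (4 * L) * (1 + Real.sqrt ((K : ℝ) * γ / (8 * L))) ^ (S - 1) ≤ A S := by
  refine mul_pow_pred_le_of_mul_le_succ (by positivity) (by positivity) hA1.ge ?_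
  intro n hn hAn
  have hgrowth := mul_sqrt_le_sqrt_mul_one_add (k := K) (m := 8 * L) (γ := γ)
    (Nat.cast_nonneg K) (by positivity) hAn
  rw [hA (n + 1) (by omega), ha (n + 1) (by omega), Nat.add_sub_cancel]
  linarith [mul_one_add (A n) (√((K : ℝ) * γ / (8 * L)))]

theorem stmt19 (L γ : ℝ) (hL : 0 < L) (hγ : 0 ≤ γ) (K : ℕ) (hK : 1 ≤ K)
    (a A : ℕ → ℝ) (hA1 : A 1 = 1 / (4 * L))
    (ha : ∀ s, 2 ≤ s → a s =
      Real.sqrt ((K : ℝ) * A (s - 1) * (1 + A (s - 1) * γ) / (8 * L)))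
    (hA : ∀ s, 2 ≤ s → A s = A (s - 1) + a s) :
    ∀ S : ℕ, 1 ≤ S →
      1 / (4 * L) * (1 + Real.sqrt ((K : ℝ) * γ / (8 * L))) ^ (S - 1) ≤ A S :=
  stmt19_general L γ hL K a A hA1 ha hA
end
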